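/- Let C be a small category with finite limits and let L be the full subcategory of C ⥤ Type on the left exact presheaves. Then L has all small limits and all small colimits (L is complete and cocomplete). -/

import Mathlib

/-!
Limits of left exact functors are computed pointwise in `C ⥤ Type`, since limits commute with
limits. For colimits, a functor `C ⥤ Type` is left exact exactly when it is an ind-object of `Cᵒᵖ`,
i.e. a filtered colimit of corepresentables; as `Cᵒᵖ` has finite colimits, `Ind Cᵒᵖ` is
cocomplete (Kashiwara–Schapira, 6.1.18).
-/

open CategoryTheory CategoryTheory.Limits

namespace CategoryTheory

namespace ObjectProperty

variable {J D : Type*} [Category* J] [Category* D] (K K' : Type*) [Category* K] [Category* K']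

instance isClosedUnderLimitsOfShape_preservesLimitsOfShape [HasLimitsOfShape K' D] :
    (preservesLimitsOfShape K : ObjectProperty (J ⥤ D)).IsClosedUnderLimitsOfShape K' where
  limitsOfShape_le := by
    rintro G ⟨h⟩
    have := h.prop_diag_obj
    have : PreservesLimitsOfShape K h.diag.flip := ⟨fun {F} ↦ ⟨fun {c} hc ↦
      ⟨evaluationJointlyReflectsLimits _ (fun k' ↦ isLimitOfPreserves (h.diag.obj k') hc)⟩⟩⟩
    exact preservesLimitsOfShape_of_natIso
      ((limitIsoFlipCompLim h.diag).symm ≪≫ (limit.isLimit _).conePointUniqueUpToIso h.isLimit)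

instance isClosedUnderLimitsOfShape_preservesFiniteLimits [HasLimitsOfShape K' D] :
    (preservesFiniteLimits : ObjectProperty (J ⥤ D)).IsClosedUnderLimitsOfShape K' where
  limitsOfShape_le := by
    rintro G ⟨h⟩
    have := h.prop_diag_obj
    exact ⟨fun K _ _ ↦ (preservesLimitsOfShape K).prop_of_isLimit h.isLimit inferInstance⟩

end ObjectProperty

section

variable {C D E : Type*} [Category* C] [Category* D] [Category* E]

lemma preservesFiniteLimits_comp_equivalence_iff (e : C ≌ D) (F : D ⥤ E) :
    PreservesFiniteLimits (e.functor ⋙ F) ↔ PreservesFiniteLimits F :=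
  ⟨fun _ ↦ preservesFiniteLimits_of_natIso (e.invFunIdAssoc F), fun _ ↦ inferInstance⟩

noncomputable def LeftExactFunctor.congrLeft (e : C ≌ D) : (C ⥤ₗ E) ≌ (D ⥤ₗ E) :=
  e.congrLeft.congrFullSubcategory (by
    ext F
    exact preservesFiniteLimits_comp_equivalence_iff e.symm F)

end

universe u in
instance LeftExactFunctor.hasColimits {C : Type u} [SmallCategory C] [HasFiniteLimits C] :
    HasColimits (C ⥤ₗ Type u) :=
  Adjunction.has_colimits_of_equivalence
    ((Ind.leftExactFunctorEquivalence Cᵒᵖ).trans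
      (LeftExactFunctor.congrLeft (opOpEquivalence C))).inverse

end CategoryTheory

/-- `L = Lex(C, Type)` is complete and cocomplete (Proposition 1(1)). -/
theorem lex_hasLimits_hasColimits (C : Type) [SmallCategory C] [HasFiniteLimits C] :
    HasLimits (ObjectProperty.FullSubcategory (fun F : C ⥤ Type => PreservesFiniteLimits F)) ∧
      HasColimits (ObjectProperty.FullSubcategory (fun F : C ⥤ Type => PreservesFiniteLimits F)) :=
  ⟨⟨fun _ _ ↦ inferInstance⟩, (inferInstance : HasColimits (C ⥤ₗ Type))⟩
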